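/- If P(z) is a complex polynomial of degree n, then max_{|z|=1} |P'(z)| ≥ (n/2)·(2·max_{|z|=1}|P(z)| − (M_0 + M_π)), where M_α = max_{1 ≤ l ≤ n} |P(e^{i(α+2lπ)/n})|. -/

import Mathlib

open Polynomial

noncomputable def maxSphere (P : Polynomial ℂ) (r : ℝ) : ℝ :=
  sSup ((fun z => ‖P.eval z‖) '' Metric.sphere (0:ℂ) r)

noncomputable def Malpha (P : Polynomial ℂ) (n : ℕ) (α : ℝ) : ℝ :=
  sSup ((fun l : ℕ => ‖P.eval (Complex.exp (Complex.I * ((α + 2 * l * Real.pi) / n)))‖) '' Set.Icc 1 n)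

/-!
Let `ω = e^{iπ/n}`, so the `2n`-th roots of unity `ω^k` are the nodes of `M_0` (even `k`) and of
`M_π` (odd `k`). With the weights `F(u) = |1 + u + ⋯ + u^{n-1}|²` (`n` times the Fejér kernel),
orthogonality of the characters `k ↦ ω^{ke}` gives, for `|z| = 1` and `m ≤ n`,
`∑_k F(ω^k z̄) ω^{km} = 2n(n - m) z^m`. By linearity, for `deg P ≤ n`,
`∑_k F(ω^k z̄) P(ω^k) = 2n² P(z) - 2n z P'(z)`.
The cases `m = 0` and `m = n` (where `ω^{kn} = (-1)^k`) show that the weights sum to `n²` over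
the even and over the odd nodes, so the triangle inequality yields
`2n² |P(z)| ≤ n² (M_0 + M_π) + 2n |P'(z)|`.
-/

open Complex Finset ComplexConjugate
open scoped Real

theorem IsPrimitiveRoot.geom_sum_zpow {K : Type*} [Field K] {ω : K} {N : ℕ}
    (hω : IsPrimitiveRoot ω N) (e : ℤ) :
    ∑ k ∈ range N, (ω ^ e) ^ k = if (N : ℤ) ∣ e then (N : K) else 0 := by
  split_ifs with h
  · simp [(hω.zpow_eq_one_iff_dvd e).2 h]
  · have hne : ω ^ e ≠ 1 := mt (hω.zpow_eq_one_iff_dvd e).1 h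
    refine eq_zero_of_ne_zero_of_mul_left_eq_zero (sub_ne_zero_of_ne hne) ?_
    rw [mul_geom_sum, ← zpow_natCast, ← zpow_mul, mul_comm, zpow_mul, zpow_natCast, hω.pow_eq_one,
      one_zpow, sub_self]

noncomputable def fejerWeight (n : ℕ) (u : ℂ) : ℝ := ‖∑ j ∈ range n, u ^ j‖ ^ 2

lemma fejerWeight_nonneg (n : ℕ) (u : ℂ) : 0 ≤ fejerWeight n u := sq_nonneg _

lemma ofReal_fejerWeight {n : ℕ} {u : ℂ} (hu : ‖u‖ = 1) :
    (fejerWeight n u : ℂ) = ∑ j ∈ range n, ∑ j' ∈ range n, u ^ ((j : ℤ) - j') := by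
  have hu0 : u ≠ 0 := norm_ne_zero_iff.mp (by rw [hu]; exact one_ne_zero)
  rw [fejerWeight, ofReal_pow, ← mul_conj', map_sum, sum_mul_sum]
  refine sum_congr rfl fun j _ => sum_congr rfl fun j' _ => ?_
  rw [map_pow, ← inv_eq_conj hu, zpow_sub₀ hu0, zpow_natCast, zpow_natCast, inv_pow, div_eq_mul_inv]

lemma two_mul_dvd_sub_add_iff {n j j' m : ℕ} (hj : j < n) (hj' : j' < n) (hm : m ≤ n) :
    (2 * n : ℤ) ∣ (j - j' + m) ↔ j' = j + m := by
  refine ⟨fun h => ?_, fun h => by simp [h]⟩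
  have := Int.eq_zero_of_abs_lt_dvd h (abs_lt.mpr ⟨by omega, by omega⟩)
  omega

lemma sum_fejerWeight_mul_pow {n m : ℕ} {ω z : ℂ} (hω : IsPrimitiveRoot ω (2 * n))
    (hz : ‖z‖ = 1) (hm : m ≤ n) :
    ∑ k ∈ range (2 * n), (fejerWeight n (ω ^ k * conj z) : ℂ) * (ω ^ k) ^ m
      = 2 * n * (n - m) * z ^ m := by
  rcases n.eq_zero_or_pos with rfl | hn
  · simp
  have hω1 : ‖ω‖ = 1 := hω.norm'_eq_one (by omega)
  have hω0 : ω ≠ 0 := norm_ne_zero_iff.mp (by rw [hω1]; exact one_ne_zero)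
  have hterm : ∀ k j j' : ℕ, (ω ^ k * conj z) ^ ((j : ℤ) - j') * (ω ^ k) ^ m
      = z ^ ((j' : ℤ) - j) * (ω ^ ((j : ℤ) - j' + m)) ^ k := by
    intro k j j'
    rw [← inv_eq_conj hz, mul_zpow, inv_zpow', neg_sub, ← zpow_natCast, ← zpow_natCast,
      ← zpow_natCast, ← zpow_mul, ← zpow_mul, ← zpow_mul, mul_right_comm, ← zpow_add₀ hω0]
    ring_nf
  have hcard : #{j ∈ range n | j + m < n} = n - m := by
    rw [← card_range (n - m)]
    congr 1
    ext j
    simp only [mem_filter, mem_range]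
    omega
  calc ∑ k ∈ range (2 * n), (fejerWeight n (ω ^ k * conj z) : ℂ) * (ω ^ k) ^ m
      = ∑ j ∈ range n, ∑ j' ∈ range n,
          z ^ ((j' : ℤ) - j) * ∑ k ∈ range (2 * n), (ω ^ ((j : ℤ) - j' + m)) ^ k := by
        have hu : ∀ k : ℕ, ‖ω ^ k * conj z‖ = 1 := fun k => by simp [hω1, hz]
        simp_rw [fun k : ℕ => ofReal_fejerWeight (n := n) (hu k), sum_mul, hterm,
          mul_sum]
        rw [sum_comm]
        exact sum_congr rfl fun _ _ => sum_comm
    _ = ∑ j ∈ range n, ∑ j' ∈ range n, if j' = j + m then 2 * n * z ^ m else 0 := by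
        refine sum_congr rfl fun j hj => sum_congr rfl fun j' hj' => ?_
        rw [hω.geom_sum_zpow]
        have hiff := two_mul_dvd_sub_add_iff (mem_range.mp hj) (mem_range.mp hj') hm
        push_cast
        by_cases h : j' = j + m
        · rw [if_pos (hiff.2 h), if_pos h, h]
          push_cast
          rw [add_sub_cancel_left, zpow_natCast, mul_comm]
        · rw [if_neg (mt hiff.1 h), if_neg h, mul_zero]
    _ = 2 * n * (n - m) * z ^ m := by
        simp_rw [sum_ite_eq', mem_range]
        rw [sum_ite, sum_const_zero, add_zero, sum_const, hcard, nsmul_eq_mul, Nat.cast_sub hm]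
        ring

theorem Finset.sum_range_two_mul {M : Type*} [AddCommMonoid M] (f : ℕ → M) (n : ℕ) :
    ∑ k ∈ range (2 * n), f k = ∑ l ∈ range n, f (2 * l) + ∑ l ∈ range n, f (2 * l + 1) := by
  induction n with
  | zero => simp
  | succ n ih =>
    rw [mul_add_one, sum_range_succ, sum_range_succ, ih, sum_range_succ, sum_range_succ]
    abel

lemma sum_fejerWeight_even_odd {n : ℕ} {ω z : ℂ} (hω : IsPrimitiveRoot ω (2 * n))
    (hz : ‖z‖ = 1) :
    ∑ l ∈ range n, fejerWeight n (ω ^ (2 * l) * conj z) = n ^ 2 ∧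
      ∑ l ∈ range n, fejerWeight n (ω ^ (2 * l + 1) * conj z) = n ^ 2 := by
  rcases n.eq_zero_or_pos with rfl | hn
  · simp
  have hωn : ω ^ n = -1 := by
    have h2 := hω.pow_of_dvd hn.ne' (dvd_mul_left n 2)
    rw [Nat.mul_div_cancel _ hn] at h2
    exact h2.eq_neg_one_of_two_right
  have htotal := sum_fejerWeight_mul_pow hω hz (Nat.zero_le n)
  have hsigned := sum_fejerWeight_mul_pow hω hz le_rfl
  have heven : ∀ l, (ω ^ (2 * l)) ^ n = 1 := fun l => by
    rw [← pow_mul, mul_comm (2 * l) n, pow_mul, hωn, (even_two_mul l).neg_one_pow]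
  have hodd : ∀ l, (ω ^ (2 * l + 1)) ^ n = -1 := fun l => by
    rw [← pow_mul, mul_comm (2 * l + 1) n, pow_mul, hωn, (odd_two_mul_add_one l).neg_one_pow]
  rw [sum_range_two_mul] at htotal hsigned
  simp only [heven, hodd, pow_zero, mul_one, mul_neg_one, sum_neg_distrib, ← sub_eq_add_neg,
    Nat.cast_zero, sub_zero, sub_self, mul_zero, zero_mul] at htotal hsigned
  have hsum : ∑ l ∈ range n, fejerWeight n (ω ^ (2 * l) * conj z)
      + ∑ l ∈ range n, fejerWeight n (ω ^ (2 * l + 1) * conj z) = 2 * n * n := by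
    exact_mod_cast htotal
  have hdiff : ∑ l ∈ range n, fejerWeight n (ω ^ (2 * l) * conj z)
      - ∑ l ∈ range n, fejerWeight n (ω ^ (2 * l + 1) * conj z) = 0 := by
    exact_mod_cast hsigned
  constructor <;> linarith

lemma mul_derivative_eval_eq_sum_range {R : Type*} [CommSemiring R] {p : R[X]} {N : ℕ}
    (hp : p.natDegree < N) (x : R) :
    x * p.derivative.eval x = ∑ m ∈ range N, p.coeff m * m * x ^ m := by
  have hterm : ∀ (m : ℕ) (a : R), x * (a * m * x ^ (m - 1)) = a * m * x ^ m := by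
    rintro (_ | m) a
    · simp
    · rw [Nat.add_sub_cancel, pow_succ]
      ring
  rw [derivative_eval, Polynomial.sum_def, mul_sum]
  simp_rw [hterm]
  exact sum_over_range' p (f := fun m a => a * m * x ^ m) (fun m => by simp) N hp

lemma sum_fejerWeight_mul_eval {n : ℕ} {ω z : ℂ} (hω : IsPrimitiveRoot ω (2 * n))
    (hz : ‖z‖ = 1) {P : ℂ[X]} (hP : P.natDegree ≤ n) :
    ∑ k ∈ range (2 * n), (fejerWeight n (ω ^ k * conj z) : ℂ) * P.eval (ω ^ k)
      = 2 * n ^ 2 * P.eval z - 2 * n * (z * P.derivative.eval z) := by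
  have hP' : P.natDegree < n + 1 := Nat.lt_succ_of_le hP
  calc ∑ k ∈ range (2 * n), (fejerWeight n (ω ^ k * conj z) : ℂ) * P.eval (ω ^ k)
      = ∑ m ∈ range (n + 1),
          P.coeff m * ∑ k ∈ range (2 * n), (fejerWeight n (ω ^ k * conj z) : ℂ) * (ω ^ k) ^ m := by
        simp_rw [eval_eq_sum_range' hP', mul_sum]
        rw [sum_comm]
        exact sum_congr rfl fun m _ => sum_congr rfl fun k _ => by ring
    _ = ∑ m ∈ range (n + 1), P.coeff m * (2 * n * (n - m) * z ^ m) :=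
        sum_congr rfl fun m hm =>
          by rw [sum_fejerWeight_mul_pow hω hz (Nat.lt_succ_iff.mp (mem_range.mp hm))]
    _ = 2 * n ^ 2 * P.eval z - 2 * n * (z * P.derivative.eval z) := by
        rw [mul_derivative_eval_eq_sum_range hP', eval_eq_sum_range' hP', mul_sum, mul_sum,
          ← sum_sub_distrib]
        exact sum_congr rfl fun m _ => by ring

lemma two_mul_sq_mul_norm_eval_le {n : ℕ} {ω z : ℂ} (hω : IsPrimitiveRoot ω (2 * n))
    (hz : ‖z‖ = 1) {P : ℂ[X]} (hP : P.natDegree ≤ n) {A B : ℝ}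
    (hA : ∀ l < n, ‖P.eval (ω ^ (2 * l))‖ ≤ A) (hB : ∀ l < n, ‖P.eval (ω ^ (2 * l + 1))‖ ≤ B) :
    2 * n ^ 2 * ‖P.eval z‖ ≤ n ^ 2 * (A + B) + 2 * n * ‖P.derivative.eval z‖ := by
  obtain ⟨hEven, hOdd⟩ := sum_fejerWeight_even_odd hω hz
  have hweighted : ‖∑ k ∈ range (2 * n), (fejerWeight n (ω ^ k * conj z) : ℂ) * P.eval (ω ^ k)‖
      ≤ n ^ 2 * (A + B) := by
    calc _ ≤ ∑ k ∈ range (2 * n), fejerWeight n (ω ^ k * conj z) * ‖P.eval (ω ^ k)‖ := by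
          refine (norm_sum_le _ _).trans_eq (sum_congr rfl fun k _ => ?_)
          rw [norm_mul, norm_real, Real.norm_of_nonneg (fejerWeight_nonneg _ _)]
      _ ≤ ∑ l ∈ range n, fejerWeight n (ω ^ (2 * l) * conj z) * A
          + ∑ l ∈ range n, fejerWeight n (ω ^ (2 * l + 1) * conj z) * B := by
          rw [sum_range_two_mul]
          gcongr with l hl l hl
          · exact fejerWeight_nonneg _ _
          · exact hA l (mem_range.mp hl)
          · exact fejerWeight_nonneg _ _
          · exact hB l (mem_range.mp hl)
      _ = n ^ 2 * (A + B) := by rw [← sum_mul, ← sum_mul, hEven, hOdd]; ring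
  have hidentity := sum_fejerWeight_mul_eval hω hz hP
  calc 2 * n ^ 2 * ‖P.eval z‖ = ‖(2 * n ^ 2 : ℂ) * P.eval z‖ := by
        rw [norm_mul]; norm_cast
    _ ≤ n ^ 2 * (A + B) + 2 * n * ‖P.derivative.eval z‖ := by
        rw [(eq_sub_iff_add_eq.mp hidentity).symm]
        refine (norm_add_le _ _).trans (add_le_add hweighted (le_of_eq ?_))
        rw [norm_mul (2 * n : ℂ), norm_mul z, hz, one_mul]
        norm_cast

lemma norm_eval_le_maxSphere (P : ℂ[X]) {r : ℝ} {z : ℂ} (hz : ‖z‖ = r) :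
    ‖P.eval z‖ ≤ maxSphere P r :=
  le_csSup ((isCompact_sphere 0 r).bddAbove_image (continuous_norm.comp P.continuous).continuousOn)
    ⟨z, by simpa using hz, rfl⟩

lemma maxSphere_le (P : ℂ[X]) {r C : ℝ} (hr : 0 ≤ r) (h : ∀ z : ℂ, ‖z‖ = r → ‖P.eval z‖ ≤ C) :
    maxSphere P r ≤ C :=
  csSup_le ((NormedSpace.sphere_nonempty.mpr hr).image _)
    (by rintro _ ⟨z, hz, rfl⟩; exact h z (by simpa using hz))

lemma norm_eval_le_Malpha (P : ℂ[X]) {n : ℕ} (hn : 1 ≤ n) (α : ℝ) (l : ℕ) :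
    ‖P.eval (exp (I * ((α + 2 * l * π) / n)))‖ ≤ Malpha P n α := by
  set value := fun l : ℕ => ‖P.eval (exp (I * ((α + 2 * l * π) / n)))‖ with hvalue
  have hperiodic : ∀ l, value (l + n) = value l := fun l => by
    have hn0 : (n : ℂ) ≠ 0 := Nat.cast_ne_zero.mpr (by omega)
    simp only [hvalue]
    rw [← exp_periodic (I * ((α + 2 * l * π) / n))]
    congr 3
    field_simp
    push_cast
    ring
  have hbdd : ∀ l ∈ Set.Icc 1 n, value l ≤ Malpha P n α := fun l hl =>
    le_csSup ((Set.finite_Icc 1 n).image _).bddAbove (Set.mem_image_of_mem _ hl)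
  show value l ≤ Malpha P n α
  induction l using Nat.strong_induction_on with
  | _ l ih =>
    rcases Nat.eq_zero_or_pos l with rfl | hl
    · rw [← hperiodic, zero_add]
      exact hbdd n ⟨hn, le_rfl⟩
    · rcases le_or_gt l n with hln | hnl
      · exact hbdd l ⟨hl, hln⟩
      · rw [← Nat.sub_add_cancel hnl.le, hperiodic]
        exact ih _ (by omega)

lemma isPrimitiveRoot_exp_pi_mul_I_div {n : ℕ} (hn : n ≠ 0) :
    IsPrimitiveRoot (exp (π * I / n)) (2 * n) := by
  convert isPrimitiveRoot_exp (2 * n) (by omega) using 2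
  push_cast
  field_simp

theorem stmt_3 (n : ℕ) (hn : 1 ≤ n) (P : Polynomial ℂ) (hdeg : P.natDegree = n) :
    maxSphere (derivative P) 1 ≥
      (n / 2) * (2 * maxSphere P 1 - (Malpha P n 0 + Malpha P n Real.pi)) := by
  set ω := exp (π * I / n)
  have hω : IsPrimitiveRoot ω (2 * n) := isPrimitiveRoot_exp_pi_mul_I_div (by omega)
  have hM₀ : ∀ l < n, ‖P.eval (ω ^ (2 * l))‖ ≤ Malpha P n 0 := fun l _ => by
    convert norm_eval_le_Malpha P hn 0 l using 4
    rw [← exp_nat_mul]; push_cast; ring_nf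
  have hMπ : ∀ l < n, ‖P.eval (ω ^ (2 * l + 1))‖ ≤ Malpha P n π := fun l _ => by
    convert norm_eval_le_Malpha P hn π l using 4
    rw [← exp_nat_mul]; push_cast; ring_nf
  have hn0 : (0 : ℝ) < n := by exact_mod_cast hn
  have hmax : maxSphere P 1 ≤ (Malpha P n 0 + Malpha P n π) / 2 + maxSphere (derivative P) 1 / n :=
    maxSphere_le P zero_le_one fun z hz => by
      have hz' : 2 * n ^ 2 * ‖P.eval z‖
          ≤ n ^ 2 * (Malpha P n 0 + Malpha P n π) + 2 * n * maxSphere (derivative P) 1 :=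
        (two_mul_sq_mul_norm_eval_le hω hz hdeg.le hM₀ hMπ).trans
          (by gcongr; exact norm_eval_le_maxSphere _ hz)
      rw [div_add_div _ _ two_ne_zero hn0.ne', le_div_iff₀ (by positivity)]
      refine le_of_mul_le_mul_left ?_ hn0
      linarith
  calc (n / 2) * (2 * maxSphere P 1 - (Malpha P n 0 + Malpha P n π))
      ≤ (n / 2) * (2 * ((Malpha P n 0 + Malpha P n π) / 2 + maxSphere (derivative P) 1 / n)
          - (Malpha P n 0 + Malpha P n π)) := by gcongr
    _ = maxSphere (derivative P) 1 := by field_simp; ring
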